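/- With the bilinear form a and space V = V⁰ × V¹ as in the single-bulk single-interface setting (one bulk Lipschitz domain Ω⁰ with Ω¹ ⊆ ∂Ω⁰ of positive surface measure, coefficients bounded below by α̲ and β̲, and homogeneous Dirichlet condition for v⁰ on a boundary portion Γ_D ⊆ ∂Ω of positive measure), there exists C > 0 depending only on the geometry such that a(v,v) ≥ C(α̲^{-1} + β̲^{-1})^{-1}‖v‖²_V for all v ∈ V₀. -/

import Mathlib

set_option maxHeartbeats 1000000


/-- Coercivity of the mixed-dimensional bilinear form in the single-bulk,
single-interface setting: with the abstract `H¹`-spaces `V0` (bulk) and `V1` (interface)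
whose norms split as `‖v‖² = ‖v‖²_{L²} + ‖∇v‖²_{L²}`, trace operator `tr`, Dirichlet
subspace `S ⊆ V0` (functions vanishing on `Γ_D`) on which a Friedrichs inequality holds,
and coefficient forms `m0`, `m1`, `mB` bounded below by `α̲`, `α̲`, `β̲`, there is `C > 0`
depending only on the geometry (through the Friedrichs and trace constants) with
`a(v, v) ≥ C (α̲⁻¹ + β̲⁻¹)⁻¹ ‖v‖²_V` for all `v ∈ V₀ = S × V1`. -/
theorem stmt8 {V0 V1 EΩ GΩ EΓ GΓ : Type*}
    [NormedAddCommGroup V0] [InnerProductSpace ℝ V0] [CompleteSpace V0]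
    [NormedAddCommGroup V1] [InnerProductSpace ℝ V1] [CompleteSpace V1]
    [NormedAddCommGroup EΩ] [NormedSpace ℝ EΩ] [NormedAddCommGroup GΩ] [NormedSpace ℝ GΩ]
    [NormedAddCommGroup EΓ] [NormedSpace ℝ EΓ] [NormedAddCommGroup GΓ] [NormedSpace ℝ GΓ]
    (sob0 : V0 →L[ℝ] EΩ) (grad0 : V0 →L[ℝ] GΩ)
    (sob1 : V1 →L[ℝ] EΓ) (grad1 : V1 →L[ℝ] GΓ)
    (tr : V0 →L[ℝ] EΓ)
    (hn0 : ∀ v : V0, ‖v‖ ^ 2 = ‖sob0 v‖ ^ 2 + ‖grad0 v‖ ^ 2)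
    (hn1 : ∀ v : V1, ‖v‖ ^ 2 = ‖sob1 v‖ ^ 2 + ‖grad1 v‖ ^ 2)
    (Ctr : ℝ) (hCtr : 0 < Ctr)
    (htr : ∀ v : V0, ‖tr v‖ ≤ Ctr * (‖sob0 v‖ + ‖grad0 v‖))
    (S : Submodule ℝ V0) (hS : IsClosed (S : Set V0))
    (CF : ℝ) (hCF : 0 < CF)
    (hFriedrichs : ∀ v ∈ S, ‖sob0 v‖ ≤ CF * ‖grad0 v‖)
    (m0 : GΩ →ₗ[ℝ] GΩ →ₗ[ℝ] ℝ) (m1 : GΓ →ₗ[ℝ] GΓ →ₗ[ℝ] ℝ) (mB : EΓ →ₗ[ℝ] EΓ →ₗ[ℝ] ℝ)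
    (αl βl : ℝ) (hαl : 0 < αl) (hβl : 0 < βl)
    (hm0 : ∀ x : GΩ, αl * ‖x‖ ^ 2 ≤ m0 x x)
    (hm1 : ∀ x : GΓ, αl * ‖x‖ ^ 2 ≤ m1 x x)
    (hmB : ∀ x : EΓ, βl * ‖x‖ ^ 2 ≤ mB x x) :
    ∃ C : ℝ, 0 < C ∧ ∀ v0 ∈ S, ∀ v1 : V1,
      C * (αl⁻¹ + βl⁻¹)⁻¹ * (‖v0‖ ^ 2 + ‖v1‖ ^ 2) ≤
        m0 (grad0 v0) (grad0 v0) + m1 (grad1 v1) (grad1 v1) +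
          mB (tr v0 - sob1 v1) (tr v0 - sob1 v1) := by
  set K : ℝ := CF ^ 2 + 1 + 2 * Ctr ^ 2 * (CF + 1) ^ 2 + 2 with hKdef
  have hK : 0 < K := by positivity
  refine ⟨K⁻¹, by positivity, ?_⟩
  intro v0 hv0 v1
  set μ : ℝ := (αl⁻¹ + βl⁻¹)⁻¹ with hμdef
  have hμ0 : 0 ≤ μ := by positivity
  have hμα : μ ≤ αl := by
    rw [hμdef]
    calc (αl⁻¹ + βl⁻¹)⁻¹ ≤ (αl⁻¹)⁻¹ :=
          inv_anti₀ (inv_pos.mpr hαl) (le_add_of_nonneg_right (by positivity))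
      _ = αl := inv_inv αl
  have hμβ : μ ≤ βl := by
    rw [hμdef]
    calc (αl⁻¹ + βl⁻¹)⁻¹ ≤ (βl⁻¹)⁻¹ :=
          inv_anti₀ (inv_pos.mpr hβl) (le_add_of_nonneg_left (by positivity))
      _ = βl := inv_inv βl
  set a0 := ‖sob0 v0‖ with ha0
  set g0 := ‖grad0 v0‖ with hg0
  set a1 := ‖sob1 v1‖ with ha1
  set g1 := ‖grad1 v1‖ with hg1
  set t := ‖tr v0 - sob1 v1‖ with ht
  have ha0n : 0 ≤ a0 := norm_nonneg _
  have hg0n : 0 ≤ g0 := norm_nonneg _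
  have ha1n : 0 ≤ a1 := norm_nonneg _
  have hg1n : 0 ≤ g1 := norm_nonneg _
  have htn : 0 ≤ t := norm_nonneg _
  have hF : a0 ≤ CF * g0 := hFriedrichs v0 hv0
  have htri : a1 ≤ t + Ctr * (a0 + g0) := by
    calc a1 = ‖(sob1 v1 - tr v0) + tr v0‖ := by rw [sub_add_cancel]
      _ ≤ ‖sob1 v1 - tr v0‖ + ‖tr v0‖ := norm_add_le _ _
      _ = t + ‖tr v0‖ := by rw [norm_sub_rev]
      _ ≤ t + Ctr * (a0 + g0) := by have := htr v0; linarith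
  have htri2 : a1 ≤ t + Ctr * (CF + 1) * g0 := by nlinarith
  have stepA : a0 ^ 2 + g0 ^ 2 + (a1 ^ 2 + g1 ^ 2) ≤ K * (g0 ^ 2 + g1 ^ 2 + t ^ 2) := by
    have h1 : a0 ^ 2 ≤ CF ^ 2 * g0 ^ 2 := by nlinarith
    have h2 : a1 ^ 2 ≤ 2 * t ^ 2 + 2 * (Ctr * (CF + 1)) ^ 2 * g0 ^ 2 := by
      nlinarith [sq_nonneg (t - Ctr * (CF + 1) * g0)]
    rw [hKdef]
    nlinarith [h1, h2, sq_nonneg g0, sq_nonneg t,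
      mul_nonneg (sq_nonneg CF) (sq_nonneg g1),
      mul_nonneg (mul_nonneg (sq_nonneg Ctr) (sq_nonneg (CF + 1))) (sq_nonneg g1),
      mul_nonneg (sq_nonneg CF) (sq_nonneg t),
      mul_nonneg (mul_nonneg (sq_nonneg Ctr) (sq_nonneg (CF + 1))) (sq_nonneg t)]
  have stepB : μ * (g0 ^ 2 + g1 ^ 2 + t ^ 2) ≤
      m0 (grad0 v0) (grad0 v0) + m1 (grad1 v1) (grad1 v1) +
        mB (tr v0 - sob1 v1) (tr v0 - sob1 v1) := by
    have h0 := hm0 (grad0 v0)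
    have h1 := hm1 (grad1 v1)
    have hB := hmB (tr v0 - sob1 v1)
    nlinarith [sq_nonneg g0, sq_nonneg g1, sq_nonneg t]
  have hv0n := hn0 v0
  have hv1n := hn1 v1
  calc K⁻¹ * μ * (‖v0‖ ^ 2 + ‖v1‖ ^ 2)
      = K⁻¹ * μ * (a0 ^ 2 + g0 ^ 2 + (a1 ^ 2 + g1 ^ 2)) := by rw [hv0n, hv1n]
    _ ≤ K⁻¹ * μ * (K * (g0 ^ 2 + g1 ^ 2 + t ^ 2)) := by
        apply mul_le_mul_of_nonneg_left stepA (by positivity)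
    _ = μ * (g0 ^ 2 + g1 ^ 2 + t ^ 2) := by field_simp
    _ ≤ _ := stepB
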